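/- For density matrices ρ and σ on a finite-dimensional Hilbert space, if σ has rank r, then the fidelity F(ρ,σ) = (Tr√(√ρ σ √ρ))² is at most the sum of the r largest eigenvalues of ρ. -/

import Mathlib

open Matrix Kronecker BigOperators
open scoped ComplexOrder

noncomputable section

namespace QCAE

variable {α β γ n : Type*}

open scoped Classical

/-- Matrix square root of a positive semidefinite matrix (junk value `0` otherwise). -/
noncomputable def msqrt [Fintype n] [DecidableEq n] (A : Matrix n n ℂ) : Matrix n n ℂ :=
  if h : A.PosSemidef then
    (h.1.eigenvectorUnitary : Matrix n n ℂ) * diagonal ((↑) ∘ (√·) ∘ h.1.eigenvalues) *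
      (star h.1.eigenvectorUnitary : Matrix n n ℂ) else 0

/-- Trace norm `‖A‖₁ = Tr √(AᴴA)`. -/
noncomputable def traceNorm [Fintype n] [DecidableEq n] (A : Matrix n n ℂ) : ℝ :=
  (msqrt (Aᴴ * A)).trace.re

/-- Fidelity `F(ρ,σ) = (Tr √(√ρ σ √ρ))²`. -/
noncomputable def fidelity [Fintype n] [DecidableEq n] (ρ σ : Matrix n n ℂ) : ℝ :=
  ((msqrt (msqrt ρ * σ * msqrt ρ)).trace.re) ^ 2

/-- A density matrix: positive semidefinite with trace one. -/
def IsDensity [Fintype n] [DecidableEq n] (ρ : Matrix n n ℂ) : Prop :=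
  ρ.PosSemidef ∧ ρ.trace = 1

/-- Sum of the `r` largest values of `v`. -/
noncomputable def sumLargest [Fintype n] (v : n → ℝ) (r : ℕ) : ℝ :=
  ((((Finset.univ : Finset n).val.map v).sort (· ≤ ·)).reverse.take r).sum

/-- Partial trace over the first tensor factor. -/
def ptraceFst [Fintype α] (M : Matrix (α × β) (α × β) ℂ) : Matrix β β ℂ :=
  fun i j => ∑ k, M (k, i) (k, j)

/-- Partial trace over the second tensor factor. -/
def ptraceSnd [Fintype β] (M : Matrix (α × β) (α × β) ℂ) : Matrix α α ℂ :=
  fun i j => ∑ k, M (i, k) (j, k)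

/-- Apply a map to the first tensor factor (`𝓔 ⊗ id`). -/
def applyFst (𝓔 : Matrix α α ℂ → Matrix β β ℂ) (M : Matrix (α × γ) (α × γ) ℂ) :
    Matrix (β × γ) (β × γ) ℂ :=
  fun p q => 𝓔 (fun a b => M (a, p.2) (b, q.2)) p.1 q.1

/-- Apply a map to the second tensor factor (`id ⊗ 𝓔`). -/
def applySnd (𝓔 : Matrix α α ℂ → Matrix β β ℂ) (M : Matrix (γ × α) (γ × α) ℂ) :
    Matrix (γ × β) (γ × β) ℂ :=
  fun p q => 𝓔 (fun a b => M (p.1, a) (q.1, b)) p.2 q.2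

/-- Complete positivity: `id_N ⊗ 𝓔` preserves positive semidefiniteness for all `N`. -/
def IsCP [Fintype α] [DecidableEq α] [Fintype β] [DecidableEq β]
    (𝓔 : Matrix α α ℂ → Matrix β β ℂ) : Prop :=
  ∀ (N : ℕ) (M : Matrix (Fin N × α) (Fin N × α) ℂ), M.PosSemidef → (applySnd 𝓔 M).PosSemidef

/-- Trace preservation. -/
def TracePreserving [Fintype α] [Fintype β] (𝓔 : Matrix α α ℂ → Matrix β β ℂ) : Prop :=
  ∀ M, (𝓔 M).trace = M.trace

/-- A quantum channel: a completely positive trace-preserving linear map. -/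
def IsChannel [Fintype α] [DecidableEq α] [Fintype β] [DecidableEq β]
    (𝓔 : Matrix α α ℂ →ₗ[ℂ] Matrix β β ℂ) : Prop :=
  IsCP (𝓔 ·) ∧ TracePreserving (𝓔 ·)

/-- The Choi state `J^𝓔 = (1/dim α) Σ_{i,j} |i⟩⟨j| ⊗ 𝓔(|i⟩⟨j|)` of a map. -/
noncomputable def choi [Fintype α] [DecidableEq α] (𝓔 : Matrix α α ℂ → Matrix β β ℂ) :
    Matrix (α × β) (α × β) ℂ :=
  ((Fintype.card α : ℂ))⁻¹ • ∑ i : α, ∑ j : α,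
    (Matrix.single i j (1 : ℂ)) ⊗ₖ 𝓔 (Matrix.single i j (1 : ℂ))

/-- The maximally entangled state `φ⁺ = (1/d) Σ_{i,j} |ii⟩⟨jj|`. -/
def phiPlus (d : ℕ) : Matrix (Fin d × Fin d) (Fin d × Fin d) ℂ :=
  fun p q => if p.1 = p.2 ∧ q.1 = q.2 then ((d : ℂ))⁻¹ else 0


section Helpers
variable {m : ℕ}

lemma list_map_sub_sum (L : List ℝ) (t : ℝ) :
    (L.map (fun x => x - t)).sum = L.sum - L.length * t := by
  induction L with
  | nil => simp
  | cons a L ih => simp [ih]; ring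

lemma sum_mul_le_sumLargest (v c : Fin m → ℝ) (r : ℕ) (hr : r ≤ m)
    (hc0 : ∀ k, 0 ≤ c k) (hc1 : ∀ k, c k ≤ 1) (hcs : ∑ k, c k = r) :
    ∑ k, v k * c k ≤ sumLargest v r := by
  rcases Nat.eq_zero_or_pos r with h0 | hrpos
  · subst h0
    have hz : ∀ k ∈ Finset.univ, c k = 0 :=
      (Finset.sum_eq_zero_iff_of_nonneg (fun i _ => hc0 i)).mp (by simpa using hcs)
    have hvz : ∀ k, v k * c k = 0 := fun k => by rw [hz k (Finset.mem_univ k), mul_zero]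
    simp [sumLargest, hvz]
  set L := (((Finset.univ : Finset (Fin m)).val.map v).sort (· ≤ ·)) with hL
  set l := L.reverse with hl
  have hlen : l.length = m := by
    simp [hl, hL, Multiset.length_sort]
  have hsort : l.Pairwise (· ≥ ·) := by
    rw [hl, List.pairwise_reverse]
    show List.Pairwise (· ≤ ·) L
    exact Multiset.pairwise_sort _ _
  have hrm : r - 1 < l.length := by omega
  set t := l[r-1] with ht
  have hpair := List.pairwise_iff_getElem.mp hsort
  have hms : ∀ f : ℝ → ℝ, ∑ k, f (v k) = (l.map f).sum := by
    intro f
    have h1 : ((Finset.univ : Finset (Fin m)).val.map (fun k => f (v k)))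
        = ((l.map f : List ℝ) : Multiset ℝ) := by
      rw [← Multiset.map_coe, hl, Multiset.coe_reverse, hL, Multiset.sort_eq,
        Multiset.map_map]
      rfl
    rw [Finset.sum, h1, Multiset.sum_coe]
  have hTake : ∀ x ∈ l.take r, t ≤ x := by
    intro x hx
    obtain ⟨i, hi, rfl⟩ := List.mem_iff_getElem.mp hx
    rw [List.getElem_take]
    have hir : i < r := lt_of_lt_of_le hi (by simp [List.length_take])
    rcases Nat.lt_or_ge i (r-1) with h | h
    · exact hpair i (r-1) (by omega) hrm h
    · have : i = r - 1 := by omega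
      subst this; exact le_refl _
  have hDrop : ∀ x ∈ l.drop r, x ≤ t := by
    intro x hx
    obtain ⟨i, hi, rfl⟩ := List.mem_iff_getElem.mp hx
    rw [List.getElem_drop]
    have hi' : r + i < l.length := by simp [List.length_drop] at hi; omega
    exact hpair (r-1) (r+i) hrm hi' (by omega)
  have claimA : ∀ k, v k * c k ≤ max (v k - t) 0 + t * c k := by
    intro k
    rcases le_total t (v k) with h | h
    · rw [max_eq_left (by linarith)]
      nlinarith [hc0 k, hc1 k]
    · have h1 : v k * c k ≤ t * c k := mul_le_mul_of_nonneg_right h (hc0 k)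
      have h2 : (0:ℝ) ≤ max (v k - t) 0 := le_max_right _ _
      linarith
  have hlentake : (l.take r).length = r := by simp [List.length_take]; omega
  calc ∑ k, v k * c k
      ≤ ∑ k, (max (v k - t) 0 + t * c k) := Finset.sum_le_sum (fun k _ => claimA k)
    _ = (∑ k, max (v k - t) 0) + t * r := by
        rw [Finset.sum_add_distrib, ← Finset.mul_sum, hcs]
    _ = (l.map (fun x => max (x - t) 0)).sum + t * r := by
        exact congrArg (fun z => z + t * (r:ℝ)) (hms (fun x => max (x - t) 0))
    _ = ((l.take r).map (fun x => max (x - t) 0)).sum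
        + ((l.drop r).map (fun x => max (x - t) 0)).sum + t * r := by
        rw [← List.sum_append, ← List.map_append, List.take_append_drop]
    _ = ((l.take r).map (fun x => x - t)).sum + 0 + t * r := by
        have h1 : (l.take r).map (fun x => max (x - t) 0) = (l.take r).map (fun x => x - t) :=
          List.map_congr_left (fun x hx => max_eq_left (by linarith [hTake x hx]))
        have h2 : ((l.drop r).map (fun x => max (x - t) 0)).sum = 0 :=
          List.sum_eq_zero (fun y hy => by
            obtain ⟨x, hx, rfl⟩ := List.mem_map.mp hy
            exact max_eq_right (by linarith [hDrop x hx]))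
        rw [h1, h2]
    _ = (l.take r).sum - r * t + 0 + t * r := by rw [list_map_sub_sum, hlentake]
    _ = (l.take r).sum := by ring
    _ = sumLargest v r := rfl

lemma psd_diag_re_nonneg {A : Matrix (Fin m) (Fin m) ℂ} (hA : A.PosSemidef) (k : Fin m) :
    0 ≤ (A k k).re := by
  have := hA.re_dotProduct_nonneg (Pi.single k 1)
  simpa [dotProduct, Matrix.mulVec, Pi.single_apply, Finset.sum_ite_eq] using this

lemma psd_trace_re_nonneg {A : Matrix (Fin m) (Fin m) ℂ} (hA : A.PosSemidef) :
    0 ≤ A.trace.re := by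
  rw [Matrix.trace, Complex.re_sum]
  exact Finset.sum_nonneg (fun k _ => psd_diag_re_nonneg hA k)

lemma trace_conjTranspose_mul_self_re (B : Matrix (Fin m) (Fin m) ℂ) :
    (Bᴴ * B).trace.re = ∑ j, ∑ i, ‖B i j‖ ^ 2 := by
  rw [Matrix.trace, Complex.re_sum]
  congr 1; funext j
  rw [Matrix.diag, Matrix.mul_apply, Complex.re_sum]
  congr 1; funext i
  rw [Matrix.conjTranspose_apply]
  rw [show (star (B i j) * B i j) = ((Complex.normSq (B i j) : ℝ) : ℂ) by
    rw [Complex.normSq_eq_conj_mul_self]; rfl]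
  rw [Complex.ofReal_re, Complex.sq_norm]

lemma trace_cs (B C : Matrix (Fin m) (Fin m) ℂ) :
    ((Bᴴ * C).trace.re) ^ 2 ≤ (Bᴴ * B).trace.re * (Cᴴ * C).trace.re := by
  have habs : |(Bᴴ * C).trace.re| ≤ ∑ j, ∑ i, ‖B i j‖ * ‖C i j‖ := by
    calc |(Bᴴ * C).trace.re| ≤ ‖(Bᴴ * C).trace‖ := Complex.abs_re_le_norm _
      _ ≤ ∑ j, ‖(Bᴴ * C) j j‖ := by
          rw [Matrix.trace]
          exact norm_sum_le _ _
      _ ≤ ∑ j, ∑ i, ‖B i j‖ * ‖C i j‖ := by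
          apply Finset.sum_le_sum
          intro j _
          rw [Matrix.mul_apply]
          calc ‖∑ i, Bᴴ j i * C i j‖ ≤ ∑ i, ‖Bᴴ j i * C i j‖ :=
              norm_sum_le _ _
            _ = ∑ i, ‖B i j‖ * ‖C i j‖ := by
              apply Finset.sum_congr rfl
              intro i _
              rw [norm_mul, Matrix.conjTranspose_apply]
              congr 1
              exact norm_star _
  have hsq : ((Bᴴ * C).trace.re) ^ 2
      ≤ (∑ j, ∑ i, ‖B i j‖ * ‖C i j‖) ^ 2 := by
    rw [← sq_abs]
    apply pow_le_pow_left₀ (abs_nonneg _) habs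
  refine hsq.trans ?_
  rw [trace_conjTranspose_mul_self_re, trace_conjTranspose_mul_self_re]
  have h2 := Finset.sum_mul_sq_le_sq_mul_sq (Finset.univ : Finset (Fin m × Fin m))
    (fun p => ‖B p.2 p.1‖) (fun p => ‖C p.2 p.1‖)
  simp only [Fintype.sum_prod_type] at h2
  exact h2

lemma proj_one_sub (P : Matrix (Fin m) (Fin m) ℂ) (hPH : Pᴴ = P) (hPP : P * P = P) :
    (1 : Matrix (Fin m) (Fin m) ℂ) - P = (1 - P)ᴴ * (1 - P) := by
  rw [Matrix.conjTranspose_sub, Matrix.conjTranspose_one, hPH, sub_mul, one_mul, mul_sub,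
    mul_one, hPP, sub_self, sub_zero]

lemma msqrt_eq {A : Matrix (Fin m) (Fin m) ℂ} (hA : A.PosSemidef) :
    msqrt A = (hA.1.eigenvectorUnitary : Matrix (Fin m) (Fin m) ℂ) *
      diagonal (fun i => ((Real.sqrt (hA.1.eigenvalues i) : ℝ) : ℂ)) *
      (hA.1.eigenvectorUnitary : Matrix (Fin m) (Fin m) ℂ)ᴴ := by
  unfold msqrt
  exact dif_pos hA

lemma msqrt_conjTranspose {A : Matrix (Fin m) (Fin m) ℂ} (hA : A.PosSemidef) :
    (msqrt A)ᴴ = msqrt A := by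
  rw [msqrt_eq hA, Matrix.conjTranspose_mul, Matrix.conjTranspose_mul,
    Matrix.conjTranspose_conjTranspose, Matrix.diagonal_conjTranspose, Matrix.mul_assoc]
  congr 2
  exact congrArg Matrix.diagonal (funext fun i => by simp)

lemma msqrt_mul_self {A : Matrix (Fin m) (Fin m) ℂ} (hA : A.PosSemidef) :
    msqrt A * msqrt A = A := by
  rw [msqrt_eq hA]
  conv_rhs => rw [hA.1.spectral_theorem]
  rw [Unitary.conjStarAlgAut_apply]
  have hU : star (hA.1.eigenvectorUnitary : Matrix (Fin m) (Fin m) ℂ) *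
      (hA.1.eigenvectorUnitary : Matrix (Fin m) (Fin m) ℂ) = 1 := Unitary.coe_star_mul_self _
  set U := (hA.1.eigenvectorUnitary : Matrix (Fin m) (Fin m) ℂ) with hUdef
  set D := diagonal (fun i => ((Real.sqrt (hA.1.eigenvalues i) : ℝ) : ℂ)) with hDdef
  rw [show U * D * Uᴴ * (U * D * Uᴴ) = U * (D * (Uᴴ * U) * D) * Uᴴ by
    simp only [Matrix.mul_assoc], ← Matrix.star_eq_conjTranspose, hU, Matrix.mul_one, hDdef,
    Matrix.diagonal_mul_diagonal]
  congr 2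
  exact congrArg Matrix.diagonal (funext fun i => by
    simp [← Complex.ofReal_mul, Real.mul_self_sqrt (hA.eigenvalues_nonneg i)])

end Helpers

set_option maxHeartbeats 1000000 in
/-- fidelity is bounded by the sum of the `rank σ` largest eigenvalues of `ρ`. -/
theorem stmt0 {m : ℕ} (ρ σ : Matrix (Fin m) (Fin m) ℂ)
    (hρ : IsDensity ρ) (hσ : IsDensity σ) (r : ℕ) (hr : σ.rank = r) :
    fidelity ρ σ ≤ sumLargest hρ.1.isHermitian.eigenvalues r := by
  have hρ1 : ρ.PosSemidef := hρ.1
  have hσ1 : σ.PosSemidef := hσ.1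
  set sρ := msqrt ρ with hsρdef
  set sσ := msqrt σ with hsσdef
  have hsρH : sρᴴ = sρ := msqrt_conjTranspose hρ1
  have hsσH : sσᴴ = sσ := msqrt_conjTranspose hσ1
  set A := sρ * σ * sρ with hAdef
  have hA : A.PosSemidef := by
    have h := hσ1.conjTranspose_mul_mul_same sρ
    rwa [hsρH] at h
  set μ := hA.1.eigenvalues with hμdef
  have hμ0 : ∀ i, 0 ≤ μ i := fun i => hA.eigenvalues_nonneg i
  set U := (hA.1.eigenvectorUnitary : Matrix (Fin m) (Fin m) ℂ) with hUdef
  have hUU : Uᴴ * U = 1 := by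
    rw [← Matrix.star_eq_conjTranspose]
    exact Matrix.mem_unitaryGroup_iff'.mp hA.1.eigenvectorUnitary.2
  have hUU' : U * Uᴴ = 1 := by
    rw [← Matrix.star_eq_conjTranspose]
    exact Matrix.mem_unitaryGroup_iff.mp hA.1.eigenvectorUnitary.2
  set D := Matrix.diagonal (fun i => ((Real.sqrt (μ i) : ℝ) : ℂ)) with hDdef
  -- the square root of A
  have hmsA : msqrt A = U * D * Uᴴ := by
    unfold msqrt
    rw [dif_pos hA]
    rfl
  -- eigendecomposition of A
  have hdiagA : Uᴴ * A * U = Matrix.diagonal (fun i => ((μ i : ℝ) : ℂ)) := by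
    have h := hA.1.conjStarAlgAut_star_eigenvectorUnitary
    simp only [Unitary.conjStarAlgAut_star_apply, Unitary.coe_star, Matrix.star_eq_conjTranspose] at h
    exact h
  -- support projector of σ
  set eσ := hσ1.1.eigenvalues with heσdef
  set Uσ := (hσ1.1.eigenvectorUnitary : Matrix (Fin m) (Fin m) ℂ) with hUσdef
  have hUσU : Uσᴴ * Uσ = 1 := by
    rw [← Matrix.star_eq_conjTranspose]
    exact Matrix.mem_unitaryGroup_iff'.mp hσ1.1.eigenvectorUnitary.2
  have hUσU' : Uσ * Uσᴴ = 1 := by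
    rw [← Matrix.star_eq_conjTranspose]
    exact Matrix.mem_unitaryGroup_iff.mp hσ1.1.eigenvectorUnitary.2
  set Jσ := Matrix.diagonal (fun i => if eσ i = 0 then (0:ℂ) else 1) with hJσdef
  have hJσH : Jσᴴ = Jσ := by
    rw [hJσdef, Matrix.diagonal_conjTranspose]
    exact congrArg Matrix.diagonal (funext fun i => by by_cases h : eσ i = 0 <;> simp [h])
  have hJσJσ : Jσ * Jσ = Jσ := by
    rw [hJσdef, Matrix.diagonal_mul_diagonal]
    exact congrArg Matrix.diagonal (funext fun i => by by_cases h : eσ i = 0 <;> simp [h])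
  set Pr := Uσ * Jσ * Uσᴴ with hPrdef
  have hPrH : Prᴴ = Pr := by
    rw [hPrdef, Matrix.conjTranspose_mul, Matrix.conjTranspose_mul, hJσH,
      Matrix.conjTranspose_conjTranspose, Matrix.mul_assoc]
  have hPrPr : Pr * Pr = Pr := by
    rw [hPrdef]
    calc Uσ * Jσ * Uσᴴ * (Uσ * Jσ * Uσᴴ)
        = Uσ * (Jσ * ((Uσᴴ * Uσ) * (Jσ * Uσᴴ))) := by simp only [Matrix.mul_assoc]
      _ = Uσ * (Jσ * (Jσ * Uσᴴ)) := by rw [hUσU, Matrix.one_mul]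
      _ = Uσ * ((Jσ * Jσ) * Uσᴴ) := by simp only [Matrix.mul_assoc]
      _ = Uσ * Jσ * Uσᴴ := by rw [hJσJσ]; simp only [Matrix.mul_assoc]
  have hPrpsd : Pr.PosSemidef := by
    have h := Matrix.posSemidef_conjTranspose_mul_self (Jσ * Uσᴴ)
    have he : (Jσ * Uσᴴ)ᴴ * (Jσ * Uσᴴ) = Pr := by
      rw [Matrix.conjTranspose_mul, Matrix.conjTranspose_conjTranspose, hJσH, hPrdef]
      calc Uσ * Jσ * (Jσ * Uσᴴ) = Uσ * ((Jσ * Jσ) * Uσᴴ) := by simp only [Matrix.mul_assoc]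
        _ = Uσ * Jσ * Uσᴴ := by rw [hJσJσ]; simp only [Matrix.mul_assoc]
    rwa [he] at h
  -- Pr absorbs sσ
  have hsσspec : sσ = Uσ * Matrix.diagonal (fun i => ((Real.sqrt (eσ i) : ℝ) : ℂ)) * Uσᴴ := by
    rw [hsσdef]
    exact msqrt_eq hσ1
  have hPrsσ : Pr * sσ = sσ := by
    rw [hPrdef, hsσspec]
    calc Uσ * Jσ * Uσᴴ * (Uσ * Matrix.diagonal (fun i => ((Real.sqrt (eσ i) : ℝ) : ℂ)) * Uσᴴ)
        = Uσ * (Jσ * ((Uσᴴ * Uσ)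
            * (Matrix.diagonal (fun i => ((Real.sqrt (eσ i) : ℝ) : ℂ)) * Uσᴴ))) := by
          simp only [Matrix.mul_assoc]
      _ = Uσ * ((Jσ * Matrix.diagonal (fun i => ((Real.sqrt (eσ i) : ℝ) : ℂ))) * Uσᴴ) := by
          rw [hUσU, Matrix.one_mul]; simp only [Matrix.mul_assoc]
      _ = Uσ * Matrix.diagonal (fun i => ((Real.sqrt (eσ i) : ℝ) : ℂ)) * Uσᴴ := by
          have hJD : Jσ * Matrix.diagonal (fun i => ((Real.sqrt (eσ i) : ℝ) : ℂ))
              = Matrix.diagonal (fun i => ((Real.sqrt (eσ i) : ℝ) : ℂ)) := by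
            rw [hJσdef, Matrix.diagonal_mul_diagonal]
            exact congrArg Matrix.diagonal (funext fun i => by
              by_cases h : eσ i = 0 <;> simp [h])
          rw [hJD]
          simp only [Matrix.mul_assoc]
  have hsσPr : sσ * Pr = sσ := by
    have h := congrArg Matrix.conjTranspose hPrsσ
    rwa [Matrix.conjTranspose_mul, hPrH, hsσH] at h
  -- trace of Pr is r
  have hTrPr : Pr.trace = (r : ℂ) := by
    rw [hPrdef, Matrix.trace_mul_cycle, hUσU, Matrix.one_mul, Matrix.trace_diagonal]
    have hcount : (∑ i, if eσ i = 0 then (0:ℂ) else 1)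
        = ((Finset.univ.filter (fun i => eσ i ≠ 0)).card : ℂ) := by
      rw [Finset.card_filter]
      push_cast
      apply Finset.sum_congr rfl
      intro i _
      by_cases h : eσ i = 0 <;> simp [h]
    rw [hcount]
    congr 1
    have hrank := hσ1.1.rank_eq_card_non_zero_eigs
    rw [hr, Fintype.card_subtype] at hrank
    exact hrank.symm
  -- the W and Y matrices
  set W := sσ * sρ * U with hWdef
  have hWW : Wᴴ * W = Matrix.diagonal (fun i => ((μ i : ℝ) : ℂ)) := by
    rw [← hdiagA, hWdef, hAdef, ← msqrt_mul_self hσ1, ← hsσdef]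
    rw [Matrix.conjTranspose_mul, Matrix.conjTranspose_mul, hsρH, hsσH]
    simp only [Matrix.mul_assoc]
  set E := Matrix.diagonal (fun i => if μ i = 0 then (0:ℂ) else (((Real.sqrt (μ i))⁻¹ : ℝ) : ℂ))
    with hEdef
  have hEH : Eᴴ = E := by
    rw [hEdef, Matrix.diagonal_conjTranspose]
    exact congrArg Matrix.diagonal (funext fun i => by by_cases h : μ i = 0 <;> simp [h])
  set Y := W * E with hYdef
  have hYW : Yᴴ * W = D := by
    rw [hYdef, Matrix.conjTranspose_mul, hEH, Matrix.mul_assoc, hWW, hEdef, hDdef,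
      Matrix.diagonal_mul_diagonal]
    refine congrArg Matrix.diagonal (funext fun i => ?_)
    by_cases h : μ i = 0
    · simp [h]
    · have hμpos : 0 < μ i := (hμ0 i).lt_of_ne (Ne.symm h)
      have hν : Real.sqrt (μ i) ≠ 0 := Real.sqrt_ne_zero'.mpr hμpos
      have hνC : ((Real.sqrt (μ i) : ℝ) : ℂ) ≠ 0 := by
        simpa using hν
      have hμC : ((μ i : ℝ) : ℂ)
          = ((Real.sqrt (μ i) : ℝ) : ℂ) * ((Real.sqrt (μ i) : ℝ) : ℂ) := by
        rw [← Complex.ofReal_mul, Real.mul_self_sqrt (hμ0 i)]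
      have keyC : (((Real.sqrt (μ i) : ℝ) : ℂ))⁻¹ * ((μ i : ℝ) : ℂ)
          = ((Real.sqrt (μ i) : ℝ) : ℂ) := by
        rw [hμC, inv_mul_cancel_left₀ hνC]
      simpa [h] using keyC
  set J := Matrix.diagonal (fun i => if μ i = 0 then (0:ℂ) else 1) with hJdef
  have hYY : Yᴴ * Y = J := by
    rw [hYdef, Matrix.conjTranspose_mul, hEH]
    calc E * Wᴴ * (W * E) = E * (Wᴴ * W) * E := by simp only [Matrix.mul_assoc]
      _ = J := by
        rw [hWW, hEdef, hJdef, Matrix.diagonal_mul_diagonal, Matrix.diagonal_mul_diagonal]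
        refine congrArg Matrix.diagonal (funext fun i => ?_)
        by_cases h : μ i = 0
        · simp [h]
        · have hμpos : 0 < μ i := (hμ0 i).lt_of_ne (Ne.symm h)
          have hν : Real.sqrt (μ i) ≠ 0 := Real.sqrt_ne_zero'.mpr hμpos
          have hνC : ((Real.sqrt (μ i) : ℝ) : ℂ) ≠ 0 := by
            simpa using hν
          have hμC : ((μ i : ℝ) : ℂ)
              = ((Real.sqrt (μ i) : ℝ) : ℂ) * ((Real.sqrt (μ i) : ℝ) : ℂ) := by
            rw [← Complex.ofReal_mul, Real.mul_self_sqrt (hμ0 i)]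
          have keyC : (((Real.sqrt (μ i) : ℝ) : ℂ))⁻¹ * ((μ i : ℝ) : ℂ)
              * (((Real.sqrt (μ i) : ℝ) : ℂ))⁻¹ = 1 := by
            rw [hμC, inv_mul_cancel_left₀ hνC, mul_inv_cancel₀ hνC]
          simpa [h] using keyC
  have hEJ : E * J = E := by
    rw [hEdef, hJdef, Matrix.diagonal_mul_diagonal]
    exact congrArg Matrix.diagonal (funext fun i => by by_cases h : μ i = 0 <;> simp [h])
  have hYJ : Y * J = Y := by
    rw [hYdef, Matrix.mul_assoc, hEJ]
  set P := Y * Yᴴ with hPdef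
  have hPH : Pᴴ = P := by
    rw [hPdef, Matrix.conjTranspose_mul, Matrix.conjTranspose_conjTranspose]
  have hPP : P * P = P := by
    rw [hPdef]
    calc Y * Yᴴ * (Y * Yᴴ) = Y * (Yᴴ * Y) * Yᴴ := by simp only [Matrix.mul_assoc]
      _ = Y * Yᴴ := by rw [hYY, hYJ]
  -- core identity
  have hCore : (sσ * Y)ᴴ * (Pr * (sρ * U)) = D := by
    rw [Matrix.conjTranspose_mul, hsσH]
    calc Yᴴ * sσ * (Pr * (sρ * U)) = Yᴴ * ((sσ * Pr) * (sρ * U)) := by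
          simp only [Matrix.mul_assoc]
      _ = Yᴴ * W := by rw [hsσPr, hWdef]; simp only [Matrix.mul_assoc]
      _ = D := hYW
  -- fidelity equals (trace D)^2
  have hmρ : msqrt ρ = sρ := by
    rfl
  have hTrD : (msqrt A).trace = D.trace := by
    rw [hmsA, Matrix.trace_mul_cycle, hUU, Matrix.one_mul]
  have hfid : fidelity ρ σ = (D.trace.re) ^ 2 := by
    unfold fidelity
    rw [hmρ, ← hAdef, hTrD]
  -- Cauchy-Schwarz
  have hCS := trace_cs (sσ * Y) (Pr * (sρ * U))
  rw [hCore] at hCS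
  -- bound on the first factor
  have hB1 : ((sσ * Y)ᴴ * (sσ * Y)).trace.re ≤ 1 := by
    have e1 : ((sσ * Y)ᴴ * (sσ * Y)).trace = (σ * P).trace := by
      rw [Matrix.conjTranspose_mul, hsσH]
      calc (Yᴴ * sσ * (sσ * Y)).trace = (Yᴴ * (σ * Y)).trace := by
            rw [← msqrt_mul_self hσ1, ← hsσdef]; simp only [Matrix.mul_assoc]
        _ = ((σ * Y) * Yᴴ).trace := Matrix.trace_mul_comm _ _
        _ = (σ * P).trace := by rw [hPdef]; simp only [Matrix.mul_assoc]
    have e2 : (σ * (1 - P)).trace = ((((1:Matrix (Fin m) (Fin m) ℂ) - P) * sσ)ᴴ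
        * (((1:Matrix (Fin m) (Fin m) ℂ) - P) * sσ)).trace := by
      have hK : (((1:Matrix (Fin m) (Fin m) ℂ) - P) * sσ)ᴴ
          * (((1:Matrix (Fin m) (Fin m) ℂ) - P) * sσ) = sσ * (1 - P) * sσ := by
        rw [Matrix.conjTranspose_mul, hsσH]
        calc sσ * (1 - P)ᴴ * ((1 - P) * sσ)
            = sσ * (((1 - P)ᴴ * (1 - P)) * sσ) := by simp only [Matrix.mul_assoc]
          _ = sσ * ((1 - P) * sσ) := by rw [← proj_one_sub P hPH hPP]
          _ = sσ * (1 - P) * sσ := by simp only [Matrix.mul_assoc]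
      rw [hK]
      calc (σ * (1 - P)).trace = (sσ * sσ * (1 - P)).trace := by
            rw [← msqrt_mul_self hσ1, ← hsσdef]
        _ = (sσ * (1 - P) * sσ).trace := (Matrix.trace_mul_cycle sσ (1 - P) sσ).symm
    have e3 : 0 ≤ (σ * (1 - P)).trace.re := by
      rw [e2]
      exact psd_trace_re_nonneg (Matrix.posSemidef_conjTranspose_mul_self _)
    have e4 : (σ * (1 - P)).trace = σ.trace - (σ * P).trace := by
      rw [Matrix.mul_sub, Matrix.mul_one, Matrix.trace_sub]
    rw [e4, hσ.2] at e3
    rw [e1]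
    simp only [Complex.sub_re, Complex.one_re] at e3
    linarith
  -- the second factor equals trace (ρ Pr)
  have hB2eq : ((Pr * (sρ * U))ᴴ * (Pr * (sρ * U))).trace = (ρ * Pr).trace := by
    rw [Matrix.conjTranspose_mul, Matrix.conjTranspose_mul, hPrH, hsρH]
    calc (Uᴴ * sρ * Pr * (Pr * (sρ * U))).trace
        = (Uᴴ * (sρ * ((Pr * Pr) * (sρ * U)))).trace := by simp only [Matrix.mul_assoc]
      _ = (Uᴴ * (sρ * (Pr * (sρ * U)))).trace := by rw [hPrPr]
      _ = ((sρ * (Pr * (sρ * U))) * Uᴴ).trace := Matrix.trace_mul_comm _ _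
      _ = (sρ * Pr * sρ * (U * Uᴴ)).trace := by simp only [Matrix.mul_assoc]
      _ = (sρ * Pr * sρ).trace := by rw [hUU', Matrix.mul_one]
      _ = (sρ * sρ * Pr).trace := Matrix.trace_mul_cycle sρ Pr sρ
      _ = (ρ * Pr).trace := by rw [msqrt_mul_self hρ1]
  have hB2psd : ((Pr * (sρ * U))ᴴ * (Pr * (sρ * U))).PosSemidef :=
    Matrix.posSemidef_conjTranspose_mul_self _
  have hB2nonneg : 0 ≤ ((Pr * (sρ * U))ᴴ * (Pr * (sρ * U))).trace.re :=
    psd_trace_re_nonneg hB2psd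
  -- eigendecomposition of ρ
  set lam := hρ.1.isHermitian.eigenvalues with hlamdef
  set V := (hρ.1.isHermitian.eigenvectorUnitary : Matrix (Fin m) (Fin m) ℂ) with hVdef
  have hVV : Vᴴ * V = 1 := by
    rw [← Matrix.star_eq_conjTranspose]
    exact Matrix.mem_unitaryGroup_iff'.mp hρ.1.isHermitian.eigenvectorUnitary.2
  have hVV' : V * Vᴴ = 1 := by
    rw [← Matrix.star_eq_conjTranspose]
    exact Matrix.mem_unitaryGroup_iff.mp hρ.1.isHermitian.eigenvectorUnitary.2
  have hspecρ : ρ = V * Matrix.diagonal (fun i => ((lam i : ℝ) : ℂ)) * Vᴴ := by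
    have h := hρ.1.isHermitian.spectral_theorem
    simp only [Unitary.conjStarAlgAut_apply, Matrix.star_eq_conjTranspose] at h
    exact h
  set G := Vᴴ * Pr * V with hGdef
  have hGpsd : G.PosSemidef := hPrpsd.conjTranspose_mul_mul_same V
  have hGsub : (1 : Matrix (Fin m) (Fin m) ℂ) - G = Vᴴ * (1 - Pr) * V := by
    rw [Matrix.mul_sub, Matrix.sub_mul, Matrix.mul_one, hGdef, hVV]
  have h1Prpsd : ((1 : Matrix (Fin m) (Fin m) ℂ) - Pr).PosSemidef := by
    rw [proj_one_sub Pr hPrH hPrPr]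
    exact Matrix.posSemidef_conjTranspose_mul_self _
  have h1Gpsd : ((1 : Matrix (Fin m) (Fin m) ℂ) - G).PosSemidef := by
    rw [hGsub]
    exact h1Prpsd.conjTranspose_mul_mul_same V
  set c := fun k => (G k k).re with hcdef
  have hc0 : ∀ k, 0 ≤ c k := fun k => psd_diag_re_nonneg hGpsd k
  have hc1 : ∀ k, c k ≤ 1 := by
    intro k
    have h := psd_diag_re_nonneg h1Gpsd k
    simp only [Matrix.sub_apply, Matrix.one_apply_eq, Complex.sub_re, Complex.one_re] at h
    linarith
  have hTrG : G.trace = (r : ℂ) := by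
    rw [hGdef, Matrix.trace_mul_cycle, ← Matrix.mul_assoc, hVV', Matrix.one_mul, hTrPr]
  have hcs : ∑ k, c k = (r : ℝ) := by
    have h : (∑ k, c k) = G.trace.re := by
      rw [Matrix.trace, Complex.re_sum]
      rfl
    rw [h, hTrG, Complex.natCast_re]
  -- trace (ρ Pr) as a weighted sum of eigenvalues
  have hTrρPr : (ρ * Pr).trace.re = ∑ k, lam k * c k := by
    have e1 : (ρ * Pr).trace = (Matrix.diagonal (fun i => ((lam i : ℝ) : ℂ)) * G).trace := by
      rw [hspecρ, hGdef]
      calc (V * Matrix.diagonal (fun i => ((lam i : ℝ) : ℂ)) * Vᴴ * Pr).trace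
          = (V * (Matrix.diagonal (fun i => ((lam i : ℝ) : ℂ)) * (Vᴴ * Pr))).trace := by
            simp only [Matrix.mul_assoc]
        _ = ((Matrix.diagonal (fun i => ((lam i : ℝ) : ℂ)) * (Vᴴ * Pr)) * V).trace :=
            Matrix.trace_mul_comm _ _
        _ = (Matrix.diagonal (fun i => ((lam i : ℝ) : ℂ)) * (Vᴴ * Pr * V)).trace := by
            simp only [Matrix.mul_assoc]
    rw [e1, Matrix.trace, Complex.re_sum]
    apply Finset.sum_congr rfl
    intro k _
    rw [Matrix.diag_apply, Matrix.diagonal_mul, Complex.re_ofReal_mul]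
  -- assemble
  have hrm : r ≤ m := by
    rw [← hr]
    have := σ.rank_le_card_width
    simpa using this
  have hfinal : ∑ k, lam k * c k ≤ sumLargest lam r :=
    sum_mul_le_sumLargest lam c r hrm hc0 hc1 hcs
  rw [hfid]
  calc (D.trace.re) ^ 2
      ≤ ((sσ * Y)ᴴ * (sσ * Y)).trace.re * ((Pr * (sρ * U))ᴴ * (Pr * (sρ * U))).trace.re := hCS
    _ ≤ 1 * ((Pr * (sρ * U))ᴴ * (Pr * (sρ * U))).trace.re :=
        mul_le_mul_of_nonneg_right hB1 hB2nonneg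
    _ = (ρ * Pr).trace.re := by rw [one_mul, hB2eq]
    _ = ∑ k, lam k * c k := hTrρPr
    _ ≤ sumLargest lam r := hfinal

end QCAE
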